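/- arXiv:0905.0002 — 3 statements merged into one kernel-verified Lean document; each statement's English description precedes it below -/
import Mathlib

section
/- Let q be a nonzero complex number that is not a root of unity, let W satisfy condition (∗₁), and let V be an I×ℂ*-graded vector space with V_i(a)=0 unless a=q^{ξ_i+1}. Then a point (B,α,β)∈μ^{-1}(0) is stable (i.e., the only B-invariant I×ℂ*-graded subspace of V contained in Ker β is zero) if and only if the following linear maps are all injective: β_{i,q}: V_i(q)→W_i(1) for every i∈I₀, and σ_{i,q}: V_i(q²) → ⊕_{h: out(h)=i} V_{in(h)}(q) ⊕ W_i(q) for every i∈I₁, where σ_{i,q} has components the maps B_{h̄,q²} and β_{i,q²}. -/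
/-!
Common setup: graded quiver varieties (Nakajima).  `𝒢 = (I,E)` is a finite graph
without edge loops with a bipartite splitting `I = I₀ ⊔ I₁` (recorded by
`ξ : I → Bool`, with `e0 e ∈ I₀` and `e1 e ∈ I₁` the endpoints of an edge `e`), and
`q ∈ ℂ^*`.  `I × ℂ^*`-graded vector spaces are recorded by their dimension vectors
`v, w : I → ℂˣ → ℕ`, the space at `(i,a)` being `Fin (v i a) → ℂ`.
-/

open scoped BigOperators

noncomputable section

variable {I E : Type} [Fintype I] [Fintype E] [DecidableEq I] [DecidableEq E]

section GQV

variable (ξ : I → Bool) (e0 e1 : E → I) (q : ℂˣ) (v w : I → ℂˣ → ℕ)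

/-- The linear-map data `(B, α, β)` on the graded vector spaces `V`, `W`:
`M(V,W) = E^•(V,V)^{[-1]} ⊕ L^•(W,V)^{[-1]} ⊕ L^•(V,W)^{[-1]}`.
The first component consists of the maps `B_{h,a} : V_{out(h)}(a) → V_{in(h)}(a q⁻¹)`
along the orientation `Ω` (each edge `e` oriented `e1 e → e0 e`), the second of the
maps along the reversed arrows, the third of `α_{i,a} : W_i(a) → V_i(a q⁻¹)` and the
fourth of `β_{i,a} : V_i(a) → W_i(a q⁻¹)`. -/
abbrev GQData : Type :=
  (∀ (e : E) (a : ℂˣ), Matrix (Fin (v (e0 e) (a * q⁻¹))) (Fin (v (e1 e) a)) ℂ) ×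
  (∀ (e : E) (a : ℂˣ), Matrix (Fin (v (e1 e) (a * q⁻¹))) (Fin (v (e0 e) a)) ℂ) ×
  (∀ (i : I) (a : ℂˣ), Matrix (Fin (v i (a * q⁻¹))) (Fin (w i a)) ℂ) ×
  (∀ (i : I) (a : ℂˣ), Matrix (Fin (w i (a * q⁻¹))) (Fin (v i a)) ℂ)

/-- The `(i,a)`-component of the moment map
`μ_{i,a}(B,α,β) = ∑_{in(h)=i} ε(h) B_{h,aq⁻¹} B_{h̄,a} + α_{i,aq⁻¹} β_{i,a}`. -/
def momentMap (x : GQData e0 e1 q v w) (i : I) (a : ℂˣ) :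
    Matrix (Fin (v i (a * q⁻¹ * q⁻¹))) (Fin (v i a)) ℂ :=
  (∑ e : E, if h : e0 e = i then
      (x.1 e (a * q⁻¹) * x.2.1 e a).submatrix
        (Fin.cast (congrArg (fun j => v j (a * q⁻¹ * q⁻¹)) h.symm))
        (Fin.cast (congrArg (fun j => v j a) h.symm))
    else 0) -
  (∑ e : E, if h : e1 e = i then
      (x.2.1 e (a * q⁻¹) * x.1 e a).submatrix
        (Fin.cast (congrArg (fun j => v j (a * q⁻¹ * q⁻¹)) h.symm))
        (Fin.cast (congrArg (fun j => v j a) h.symm))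
    else 0) +
  x.2.2.1 i (a * q⁻¹) * x.2.2.2 i a

/-- The moment map equation `μ(B,α,β) = 0`. -/
def IsMomentZero (x : GQData e0 e1 q v w) : Prop :=
  ∀ (i : I) (a : ℂˣ), momentMap e0 e1 q v w x i a = 0

/-- Stability: the only `B`-invariant `I × ℂ^*`-graded subspace of `V` contained in
`Ker β` is zero. -/
def IsStable (x : GQData e0 e1 q v w) : Prop :=
  ∀ X : ∀ (i : I) (a : ℂˣ), Submodule ℂ (Fin (v i a) → ℂ),
    (∀ (e : E) (a : ℂˣ), (X (e1 e) a).map (x.1 e a).mulVecLin ≤ X (e0 e) (a * q⁻¹)) →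
    (∀ (e : E) (a : ℂˣ), (X (e0 e) a).map (x.2.1 e a).mulVecLin ≤ X (e1 e) (a * q⁻¹)) →
    (∀ (i : I) (a : ℂˣ), X i a ≤ LinearMap.ker (x.2.2.2 i a).mulVecLin) →
    ∀ (i : I) (a : ℂˣ), X i a = ⊥

/-- The group `G_V = ∏_{i,a} GL(V_i(a))`. -/
abbrev GradGL : Type := ∀ (i : I) (a : ℂˣ), GL (Fin (v i a)) ℂ

/-- The action of `G_V` on the data `(B,α,β)`. -/
def gAct (g : GradGL v) (x : GQData e0 e1 q v w) : GQData e0 e1 q v w :=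
  (fun e a => ((g (e0 e) (a * q⁻¹) :
        Matrix (Fin (v (e0 e) (a * q⁻¹))) (Fin (v (e0 e) (a * q⁻¹))) ℂ) * x.1 e a) *
      (((g (e1 e) a)⁻¹ : GL (Fin (v (e1 e) a)) ℂ) :
        Matrix (Fin (v (e1 e) a)) (Fin (v (e1 e) a)) ℂ),
   fun e a => ((g (e1 e) (a * q⁻¹) :
        Matrix (Fin (v (e1 e) (a * q⁻¹))) (Fin (v (e1 e) (a * q⁻¹))) ℂ) * x.2.1 e a) *
      (((g (e0 e) a)⁻¹ : GL (Fin (v (e0 e) a)) ℂ) :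
        Matrix (Fin (v (e0 e) a)) (Fin (v (e0 e) a)) ℂ),
   fun i a => (g i (a * q⁻¹) :
        Matrix (Fin (v i (a * q⁻¹))) (Fin (v i (a * q⁻¹))) ℂ) * x.2.2.1 i a,
   fun i a => x.2.2.2 i a * (((g i a)⁻¹ : GL (Fin (v i a)) ℂ) :
        Matrix (Fin (v i a)) (Fin (v i a)) ℂ))

/-- The `G_V`-orbit of a point. -/
def gOrbit (x : GQData e0 e1 q v w) : Set (GQData e0 e1 q v w) :=
  {y | ∃ g : GradGL v, y = gAct e0 e1 q v w g x}

/-- The space `E_W` of representations of the decorated quiver on `W` (for `W`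
satisfying `(∗₁)`): the maps `x_i : W_{i'} → W_i` for `i ∈ I₀` (i.e.
`W_i(q²) → W_i(1)`), `x_i : W_i → W_{i'}` for `i ∈ I₁` (i.e. `W_i(q³) → W_i(q)`),
and `y_h : W_{out(h)} → W_{in(h)}` (i.e. `W_{e1 e}(q³) → W_{e0 e}(1)`). -/
abbrev EWSp : Type :=
  (∀ i : {i : I // ξ i = false}, Matrix (Fin (w i.1 (q ^ 0))) (Fin (w i.1 (q ^ 2))) ℂ) ×
  (∀ i : {i : I // ξ i = true}, Matrix (Fin (w i.1 (q ^ 1))) (Fin (w i.1 (q ^ 3))) ℂ) ×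
  (∀ e : E, Matrix (Fin (w (e0 e) (q ^ 0))) (Fin (w (e1 e) (q ^ 3))) ℂ)

/-- The map `μ⁻¹(0) → E_W`, `[B,α,β] ↦ (⊕ x_i, ⊕ y_h)` with
`x_i = β_{i,q^{ξ_i+1}} α_{i,q^{ξ_i+2}}` and
`y_h = β_{in(h),q} B_{h,q²} α_{out(h),q³}`. -/
def PhiMap (x : GQData e0 e1 q v w) : EWSp ξ e0 e1 q w :=
  (fun i => (x.2.2.2 i.1 (q ^ 2 * q⁻¹) * x.2.2.1 i.1 (q ^ 2)).submatrix
      (Fin.cast (congrArg (w i.1) (show (q : ℂˣ) ^ 0 = q ^ 2 * q⁻¹ * q⁻¹ by group))) id,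
   fun i => (x.2.2.2 i.1 (q ^ 3 * q⁻¹) * x.2.2.1 i.1 (q ^ 3)).submatrix
      (Fin.cast (congrArg (w i.1) (show (q : ℂˣ) ^ 1 = q ^ 3 * q⁻¹ * q⁻¹ by group))) id,
   fun e => (x.2.2.2 (e0 e) (q ^ 3 * q⁻¹ * q⁻¹) *
        (x.1 e (q ^ 3 * q⁻¹) * x.2.2.1 (e1 e) (q ^ 3))).submatrix
      (Fin.cast (congrArg (w (e0 e))
        (show (q : ℂˣ) ^ 0 = q ^ 3 * q⁻¹ * q⁻¹ * q⁻¹ by group))) id)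

end GQV
/-- The map `σ_{i,q} : V_i(q²) → ⊕_{h : out(h) = i} V_{in(h)}(q) ⊕ W_i(q)` with
components `B_{h̄,q²}` and `β_{i,q²}`, for `i ∈ I₁`. -/
def sigmaStab (e0 e1 : E → I) (q : ℂˣ) (v w : I → ℂˣ → ℕ)
    (x : GQData e0 e1 q v w) (i : I) :
    (Fin (v i (q ^ 2)) → ℂ) →
      (∀ e : {e : E // e1 e = i}, Fin (v (e0 e.1) (q ^ 2 * q⁻¹)) → ℂ) ×
        (Fin (w i (q ^ 2 * q⁻¹)) → ℂ) :=
  fun z =>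
    (fun e => (x.1 e.1 (q ^ 2)).mulVec
        (fun t => z (Fin.cast (congrArg (fun j => v j (q ^ 2)) e.2) t)),
     (x.2.2.2 i (q ^ 2)).mulVec z)

private lemma zero_of_dim_zero {n : ℕ} (h : n = 0) (f : Fin n → ℂ) : f = 0 := by
  subst h; exact funext fun t => t.elim0

/-- stability criterion.  Let `q ∈ ℂ^*` not be a root of unity, let
`W` satisfy `(∗₁)` and let `V` satisfy `V_i(a) = 0` unless `a = q^{ξ_i+1}`.  A point
`(B,α,β) ∈ μ⁻¹(0)` is stable iff the maps `β_{i,q} : V_i(q) → W_i(1)` (`i ∈ I₀`) and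
`σ_{i,q} : V_i(q²) → ⊕_{h : out(h)=i} V_{in(h)}(q) ⊕ W_i(q)` (`i ∈ I₁`) are all
injective. -/
theorem isStable_iff_injective
    (ξ : I → Bool) (e0 e1 : E → I)
    (he0 : ∀ e, ξ (e0 e) = false) (he1 : ∀ e, ξ (e1 e) = true)
    (q : ℂˣ) (hq : ∀ n : ℕ, 0 < n → q ^ n ≠ 1)
    (v w : I → ℂˣ → ℕ)
    (hW : ∀ i a, w i a ≠ 0 → a = q ^ (cond (ξ i) 1 0) ∨ a = q ^ (cond (ξ i) 1 0 + 2))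
    (hV : ∀ i a, v i a ≠ 0 → a = q ^ (cond (ξ i) 1 0 + 1))
    (x : GQData e0 e1 q v w) (hx : IsMomentZero e0 e1 q v w x) :
    IsStable e0 e1 q v w x ↔
      (∀ i : I, ξ i = false →
          Function.Injective (x.2.2.2 i (q ^ 1)).mulVecLin) ∧
      ∀ i : I, ξ i = true →
        Function.Injective (sigmaStab e0 e1 q v w x i) := by
  classical
  have hq2 : (q : ℂˣ) ^ 2 ≠ 1 := hq 2 (by norm_num)
  constructor
  · intro hs
    constructor
    · -- β injectivity
      intro i hi
      rw [← LinearMap.ker_eq_bot]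
      have hst := hs (fun j a => if j = i ∧ a = q ^ 1 then
          LinearMap.ker (x.2.2.2 j a).mulVecLin else ⊥) ?_ ?_ ?_ i (q ^ 1)
      · simpa using hst
      · intro e a
        have hne : ¬ (e1 e = i ∧ a = q ^ 1) := by
          rintro ⟨h1, -⟩
          have := he1 e
          rw [h1, hi] at this
          exact Bool.noConfusion this
        simp only [if_neg hne, Submodule.map_bot, bot_le]
      · intro e a
        by_cases h : e0 e = i ∧ a = q ^ 1
        · intro y hy
          have hy0 : y = 0 := by
            apply zero_of_dim_zero
            by_contra hv
            have hva := hV (e1 e) (a * q⁻¹) hv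
            rw [he1 e, h.2] at hva
            apply hq2
            calc (q : ℂˣ) ^ 2 = q ^ (cond true 1 0 + 1) := rfl
              _ = q ^ 1 * q⁻¹ := hva.symm
              _ = 1 := by group
          rw [hy0]
          exact Submodule.zero_mem _
        · simp only [if_neg h, Submodule.map_bot, bot_le]
      · intro j a
        by_cases h : j = i ∧ a = q ^ 1
        · simp only [if_pos h]
          exact le_rfl
        · simp only [if_neg h]
          exact bot_le
    · -- σ injectivity
      intro i hi
      set K : ∀ (j : I) (a : ℂˣ), Submodule ℂ (Fin (v j a) → ℂ) := fun j a =>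
        LinearMap.ker (x.2.2.2 j a).mulVecLin ⊓
        ⨅ e : {e : E // e1 e = j},
          LinearMap.ker ((x.1 e.1 a).mulVecLin ∘ₗ
            LinearMap.funLeft ℂ ℂ (Fin.cast (congrArg (fun k => v k a) e.2))) with hKdef
      have hKbot : K i (q ^ 2) = ⊥ := by
        have hst := hs (fun j a => if j = i ∧ a = q ^ 2 then K j a else ⊥) ?_ ?_ ?_ i (q ^ 2)
        · simpa using hst
        · intro e a
          by_cases h : e1 e = i ∧ a = q ^ 2
          · simp only [if_pos h]
            rintro y ⟨z, hz, rfl⟩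
            have hz2 := hz.2
            have hmem := (Submodule.mem_iInf _).mp hz2 ⟨e, rfl⟩
            rw [LinearMap.mem_ker] at hmem
            have hfl : (LinearMap.funLeft ℂ ℂ
                (Fin.cast (congrArg (fun k => v k a) (rfl : e1 e = e1 e)))) z = z := by
              funext t
              simp [LinearMap.funLeft_apply]
            rw [LinearMap.comp_apply, hfl] at hmem
            rw [hmem]
            exact Submodule.zero_mem _
          · simp only [if_neg h, Submodule.map_bot, bot_le]
        · intro e a
          have hne : ¬ (e0 e = i ∧ a = q ^ 2) := by
            rintro ⟨h1, -⟩
            have := he0 e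
            rw [h1, hi] at this
            exact Bool.noConfusion this
          simp only [if_neg hne, Submodule.map_bot, bot_le]
        · intro j a
          by_cases h : j = i ∧ a = q ^ 2
          · simp only [if_pos h]
            exact inf_le_left
          · simp only [if_neg h]
            exact bot_le
      intro z z' hzz
      have hmem : z - z' ∈ K i (q ^ 2) := by
        refine Submodule.mem_inf.mpr ⟨?_, ?_⟩
        · rw [LinearMap.mem_ker, map_sub]
          have h2 := congrArg Prod.snd hzz
          simp only [sigmaStab] at h2
          simp only [Matrix.mulVecLin_apply, h2, sub_self]
        · refine (Submodule.mem_iInf _).mpr fun e => ?_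
          rw [LinearMap.mem_ker, LinearMap.comp_apply, map_sub, map_sub]
          have h1 := congrFun (congrArg Prod.fst hzz) e
          simp only [sigmaStab] at h1
          have hfz : ∀ u : Fin (v i (q ^ 2)) → ℂ,
              (LinearMap.funLeft ℂ ℂ
                (Fin.cast (congrArg (fun k => v k (q ^ 2)) e.2))) u =
              fun t => u (Fin.cast (congrArg (fun j => v j (q ^ 2)) e.2) t) := by
            intro u; rfl
          rw [hfz, hfz]
          simp only [Matrix.mulVecLin_apply, h1, sub_self]
      rw [hKbot, Submodule.mem_bot, sub_eq_zero] at hmem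
      exact hmem
  · rintro ⟨hβ, hσ⟩ X hB hBbar hker
    have hA : ∀ j a, ξ j = false → X j a = ⊥ := by
      intro j a hj
      rw [eq_bot_iff]
      intro z hz
      rw [Submodule.mem_bot]
      by_cases hv : v j a = 0
      · exact zero_of_dim_zero hv z
      · have ha' : a = q ^ 1 := by rw [hV j a hv, hj]; rfl
        subst ha'
        have h0 : (x.2.2.2 j (q ^ 1)).mulVecLin z = 0 := hker j (q ^ 1) hz
        have := hβ j hj (show (x.2.2.2 j (q ^ 1)).mulVecLin z
            = (x.2.2.2 j (q ^ 1)).mulVecLin 0 by rw [h0, map_zero])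
        exact this
    have hBt : ∀ j a, ξ j = true → X j a = ⊥ := by
      intro j a hj
      rw [eq_bot_iff]
      intro z hz
      rw [Submodule.mem_bot]
      by_cases hv : v j a = 0
      · exact zero_of_dim_zero hv z
      · have ha' : a = q ^ 2 := by rw [hV j a hv, hj]; rfl
        subst ha'
        apply hσ j hj
        show sigmaStab e0 e1 q v w x j z = sigmaStab e0 e1 q v w x j 0
        simp only [sigmaStab, Prod.mk.injEq]
        constructor
        · funext e
          obtain ⟨e, he⟩ := e
          have hzero : ∀ u : Fin (v (e1 e) (q ^ 2)) → ℂ, u ∈ X (e1 e) (q ^ 2) →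
              (x.1 e (q ^ 2)).mulVec u = 0 := by
            intro u hu
            have hmap := hB e (q ^ 2)
            have : (x.1 e (q ^ 2)).mulVecLin u ∈ X (e0 e) (q ^ 2 * q⁻¹) :=
              hmap (Submodule.mem_map_of_mem hu)
            rw [hA (e0 e) (q ^ 2 * q⁻¹) (he0 e), Submodule.mem_bot] at this
            simpa [Matrix.mulVecLin_apply] using this
          subst he
          have hcast : (fun t => z (Fin.cast
              (congrArg (fun k => v k (q ^ 2)) (rfl : e1 e = e1 e)) t)) = z := by
            funext t
            exact congrArg z (Fin.ext rfl)
          rw [hcast]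
          have : (fun t => (0 : Fin (v (e1 e) (q ^ 2)) → ℂ) (Fin.cast
              (congrArg (fun k => v k (q ^ 2)) (rfl : e1 e = e1 e)) t)) =
              (0 : Fin (v (e1 e) (q ^ 2)) → ℂ) := rfl
          rw [this, Matrix.mulVec_zero]
          exact hzero z hz
        · rw [Matrix.mulVec_zero]
          have h0 : (x.2.2.2 j (q ^ 2)).mulVecLin z = 0 := hker j (q ^ 2) hz
          simpa [Matrix.mulVecLin_apply] using h0
    intro i a
    cases hξ : ξ i with
    | false => exact hA i a hξ
    | true => exact hBt i a hξ
end
end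

section
/- Let W satisfy condition (∗₁) and let V be an I×ℂ*-graded vector space with V_i(a)=0 unless a=q^{ξ_i+1}. Let F̃(ν,W)^⊥ ⊂ 𝓕(ν,W)×E_W* be the annihilator of the vector subbundle F̃(ν,W) ⊂ 𝓕(ν,W)×E_W, with projection π^⊥: F̃(ν,W)^⊥ → E_W*. Then the fiber of π^⊥ over a point (⊕x*_i, ⊕y*_{h̄}) of E_W* is isomorphic to the variety of I×ℂ*-graded subspaces X of σW satisfying: X_i(q²)=0 for i∈I₀, X_i(q)=σW_i(q) for i∈I₁, dim X_i(1)=dim V_i(q) for i∈I₀, dim X_i(q³)=dim V_i(q²) for i∈I₁, and X is invariant under the reflected representation (⊕_{i∈I} σx_i, ⊕_{h∈Ω} σy_h); i.e., it is the quiver Grassmannian Gr_V(σW). -/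
/-!
Common setup: graded quiver varieties (Nakajima).  `𝒢 = (I,E)` is a finite graph
without edge loops with a bipartite splitting `I = I₀ ⊔ I₁` (recorded by
`ξ : I → Bool`, with `e0 e ∈ I₀` and `e1 e ∈ I₁` the endpoints of an edge `e`), and
`q ∈ ℂ^*`.  `I × ℂ^*`-graded vector spaces are recorded by their dimension vectors
`v, w : I → ℂˣ → ℕ`, the space at `(i,a)` being `Fin (v i a) → ℂ`.
-/

open scoped BigOperators

noncomputable section

variable {I E : Type} [Fintype I] [Fintype E] [DecidableEq I] [DecidableEq E]

section FTilde

variable (ξ : I → Bool) (e0 e1 : E → I) (q : ℂˣ) (w : I → ℂˣ → ℕ)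

/-- The ambient space `W_i(q) ⊕ ⊕_{h ∈ Ω : out(h) = i} W_{in(h)}(1)` for the subspace
`X_i` at a vertex `i ∈ I₁`. -/
abbrev AmbSp (i : I) : Type :=
  (Fin (w i (q ^ 1)) → ℂ) × (∀ e : {e : E // e1 e = i}, Fin (w (e0 e.1) (q ^ 0)) → ℂ)

/-- The incidence variety `F̃(ν,W) ⊆ E_W × ∏ Grassmannians`: the data of a
representation `(⊕ x_i, ⊕ y_h) ∈ E_W` and a collection `X = (X_i)_{i ∈ I}` of
subspaces `X_i ⊆ W_i(1)` (`i ∈ I₀`), resp.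
`X_i ⊆ W_i(q) ⊕ ⊕_{h : out(h)=i} X_{in(h)}` (`i ∈ I₁`), with `dim X_i = ν i`,
`Im x_i ⊆ X_i` (`i ∈ I₀`) and `Im (x_i ⊕ ⊕_{h : out(h)=i} y_h) ⊆ X_i` (`i ∈ I₁`). -/
def FTilde (he0 : ∀ e, ξ (e0 e) = false) (ν : I → ℕ) : Type :=
  { p : EWSp ξ e0 e1 q w ×
        (∀ i : {i : I // ξ i = false}, Submodule ℂ (Fin (w i.1 (q ^ 0)) → ℂ)) ×
        (∀ i : {i : I // ξ i = true}, Submodule ℂ (AmbSp e0 e1 q w i.1)) //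
      (∀ i : {i : I // ξ i = false}, Module.finrank ℂ (p.2.1 i) = ν i.1) ∧
      (∀ i : {i : I // ξ i = true}, Module.finrank ℂ (p.2.2 i) = ν i.1) ∧
      (∀ (i : {i : I // ξ i = true}) (z : AmbSp e0 e1 q w i.1), z ∈ p.2.2 i →
        ∀ e : {e : E // e1 e = i.1}, z.2 e ∈ p.2.1 ⟨e0 e.1, he0 e.1⟩) ∧
      (∀ i : {i : I // ξ i = false},
        LinearMap.range (p.1.1 i).mulVecLin ≤ p.2.1 i) ∧
      ∀ (i : {i : I // ξ i = true}) (z : Fin (w i.1 (q ^ 3)) → ℂ),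
        ((p.1.2.1 i).mulVec z,
          fun e : {e : E // e1 e = i.1} =>
            (p.1.2.2 e.1).mulVec
              (fun t => z (Fin.cast (congrArg (fun j => w j (q ^ 3)) e.2) t))) ∈
          p.2.2 i }

end FTilde

section Perp

variable (ξ : I → Bool) (e0 e1 : E → I) (q : ℂˣ) (w : I → ℂˣ → ℕ)

/-- The dual space `E_W^*`, consisting of the maps
`x_i^* : W_i(q^{ξ_i}) → W_i(q^{ξ_i+2})` and `y_{h̄}^* : W_{in(h)}(1) → W_{out(h)}(q³)`. -/
abbrev EWStarSp : Type :=
  (∀ i : {i : I // ξ i = false}, Matrix (Fin (w i.1 (q ^ 2))) (Fin (w i.1 (q ^ 0))) ℂ) ×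
  (∀ i : {i : I // ξ i = true}, Matrix (Fin (w i.1 (q ^ 3))) (Fin (w i.1 (q ^ 1))) ℂ) ×
  (∀ e : E, Matrix (Fin (w (e1 e) (q ^ 3))) (Fin (w (e0 e) (q ^ 0))) ℂ)

/-- The trace pairing between `E_W` and `E_W^*`. -/
def ewPairing (ρ : EWSp ξ e0 e1 q w) (π : EWStarSp ξ e0 e1 q w) : ℂ :=
  (∑ i : {i : I // ξ i = false}, (ρ.1 i * π.1 i).trace) +
  (∑ i : {i : I // ξ i = true}, (ρ.2.1 i * π.2.1 i).trace) +
  ∑ e : E, (ρ.2.2 e * π.2.2 e).trace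

/-- The fiber over `(⊕ x_i^*, ⊕ y_{h̄}^*) ∈ E_W^*` of the projection
`π^⊥ : F̃(ν,W)^⊥ → E_W^*`, where `F̃(ν,W)^⊥ ⊆ 𝓕(ν,W) × E_W^*` is the annihilator of
the vector subbundle `F̃(ν,W) ⊆ 𝓕(ν,W) × E_W`: those `X ∈ 𝓕(ν,W)` such that the
trace pairing of `π` with every `ρ ∈ E_W` incident to `X` vanishes. -/
def PerpFiber (he0 : ∀ e, ξ (e0 e) = false) (π : EWStarSp ξ e0 e1 q w) (ν : I → ℕ) :
    Type :=
  { X : (∀ i : {i : I // ξ i = false}, Submodule ℂ (Fin (w i.1 (q ^ 0)) → ℂ)) ×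
        (∀ i : {i : I // ξ i = true}, Submodule ℂ (AmbSp e0 e1 q w i.1)) //
      (∀ i : {i : I // ξ i = false}, Module.finrank ℂ (X.1 i) = ν i.1) ∧
      (∀ i : {i : I // ξ i = true}, Module.finrank ℂ (X.2 i) = ν i.1) ∧
      (∀ (i : {i : I // ξ i = true}) (z : AmbSp e0 e1 q w i.1), z ∈ X.2 i →
        ∀ e : {e : E // e1 e = i.1}, z.2 e ∈ X.1 ⟨e0 e.1, he0 e.1⟩) ∧
      ∀ ρ : EWSp ξ e0 e1 q w,
        ((∀ i : {i : I // ξ i = false},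
            LinearMap.range (ρ.1 i).mulVecLin ≤ X.1 i) ∧
          ∀ (i : {i : I // ξ i = true}) (z : Fin (w i.1 (q ^ 3)) → ℂ),
            ((ρ.2.1 i).mulVec z,
              fun e : {e : E // e1 e = i.1} =>
                (ρ.2.2 e.1).mulVec
                  (fun t => z (Fin.cast (congrArg (fun j => w j (q ^ 3)) e.2) t))) ∈
              X.2 i) →
        ewPairing ξ e0 e1 q w ρ π = 0 }

/-- The map `x_i^* + ∑_{h : out(h) = i} y_{h̄}^* :
W_i(q) ⊕ ⊕_{h : out(h)=i} W_{in(h)}(1) → W_i(q³)` whose kernel is `(σW)_i(q³)`,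
for `i ∈ I₁`. -/
def sigmaKerMap (π : EWStarSp ξ e0 e1 q w) (i : {i : I // ξ i = true}) :
    AmbSp e0 e1 q w i.1 →ₗ[ℂ] (Fin (w i.1 (q ^ 3)) → ℂ) :=
  (π.2.1 i).mulVecLin.comp (LinearMap.fst ℂ _ _) +
    ∑ e : {e : E // e1 e = i.1},
      ((LinearMap.funLeft ℂ ℂ
            (Fin.cast (congrArg (fun j => w j (q ^ 3)) e.2.symm))).comp
          (π.2.2 e.1).mulVecLin).comp
        ((LinearMap.proj e).comp (LinearMap.snd ℂ _ _))

/-- The quiver Grassmannian `Gr_V(σW)`: `I × ℂ^*`-graded subspaces `X` of `σW` with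
`X_i(q²) = 0` (`i ∈ I₀`), `X_i(q) = (σW)_i(q)` (`i ∈ I₁`), `dim X_i(1) = dim V_i(q)`
(`i ∈ I₀`), `dim X_i(q³) = dim V_i(q²)` (`i ∈ I₁`), invariant under the reflected
representation `(⊕ σx_i, ⊕ σy_h)`: for `i ∈ I₀` this means `X_i(1) ⊆ Ker x_i^*`, for
`i ∈ I₁` that `X_i(q³) ⊆ (σW)_i(q³) = Ker (x_i^* + ∑ y_{h̄}^*)` and that the
projections `σy_h` carry `X_{out(h)}(q³)` into `X_{in(h)}(1)`. -/
def GrSigmaGraded (he0 : ∀ e, ξ (e0 e) = false) (π : EWStarSp ξ e0 e1 q w)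
    (ν : I → ℕ) : Type :=
  { Y : (∀ i : {i : I // ξ i = false}, Submodule ℂ (Fin (w i.1 (q ^ 0)) → ℂ)) ×
        (∀ i : {i : I // ξ i = true}, Submodule ℂ (AmbSp e0 e1 q w i.1)) //
      (∀ i : {i : I // ξ i = false},
        Module.finrank ℂ (Y.1 i) = ν i.1 ∧
          Y.1 i ≤ LinearMap.ker (π.1 i).mulVecLin) ∧
      (∀ i : {i : I // ξ i = true},
        Module.finrank ℂ (Y.2 i) = ν i.1 ∧
          Y.2 i ≤ LinearMap.ker (sigmaKerMap ξ e0 e1 q w π i)) ∧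
      ∀ (i : {i : I // ξ i = true}) (z : AmbSp e0 e1 q w i.1), z ∈ Y.2 i →
        ∀ e : {e : E // e1 e = i.1}, z.2 e ∈ Y.1 ⟨e0 e.1, he0 e.1⟩ }

end Perp

section ProofLemmas
open Matrix
set_option linter.unusedSectionVars false

variable (ξ : I → Bool) (e0 e1 : E → I) (q : ℂˣ) (w : I → ℂˣ → ℕ)

theorem trace_mul_zero_of_range_le_ker {m n : Type} [Fintype m] [Fintype n]
    [DecidableEq m] [DecidableEq n]
    (A : Matrix m n ℂ) (B : Matrix n m ℂ)
    (h : LinearMap.range A.mulVecLin ≤ LinearMap.ker B.mulVecLin) :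
    (A * B).trace = 0 := by
  have hBA : B * A = 0 := by
    ext s t
    have h2 : B *ᵥ (A *ᵥ Pi.single t 1) = 0 :=
      h (LinearMap.mem_range_self A.mulVecLin (Pi.single t 1))
    calc (B * A) s t = ((B * A) *ᵥ Pi.single t 1) s := by
          rw [Matrix.mulVec_single]; simp
      _ = 0 := by rw [← Matrix.mulVec_mulVec, h2]; rfl
  rw [Matrix.trace_mul_comm, hBA, Matrix.trace_zero]

theorem sigmaKerMap_apply_coord (π : EWStarSp ξ e0 e1 q w) (i : {i : I // ξ i = true})
    (z : AmbSp e0 e1 q w i.1) (t : Fin (w i.1 (q ^ 3))) :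
    sigmaKerMap ξ e0 e1 q w π i z t =
      (π.2.1 i).mulVec z.1 t +
        ∑ e : {e : E // e1 e = i.1},
          (π.2.2 e.1).mulVec (z.2 e)
            (Fin.cast (congrArg (fun j => w j (q ^ 3)) e.2.symm) t) := by
  simp [sigmaKerMap, LinearMap.sum_apply, Finset.sum_apply, LinearMap.funLeft]

theorem perp_to_ker0 (π : EWStarSp ξ e0 e1 q w)
    (X1 : ∀ i : {i : I // ξ i = false}, Submodule ℂ (Fin (w i.1 (q ^ 0)) → ℂ))
    (X2 : ∀ i : {i : I // ξ i = true}, Submodule ℂ (AmbSp e0 e1 q w i.1))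
    (hperp : ∀ ρ : EWSp ξ e0 e1 q w,
        ((∀ i : {i : I // ξ i = false},
            LinearMap.range (ρ.1 i).mulVecLin ≤ X1 i) ∧
          ∀ (i : {i : I // ξ i = true}) (z : Fin (w i.1 (q ^ 3)) → ℂ),
            ((ρ.2.1 i).mulVec z,
              fun e : {e : E // e1 e = i.1} =>
                (ρ.2.2 e.1).mulVec
                  (fun t => z (Fin.cast (congrArg (fun j => w j (q ^ 3)) e.2) t))) ∈
              X2 i) →
        ewPairing ξ e0 e1 q w ρ π = 0)
    (i : {i : I // ξ i = false}) :
    X1 i ≤ LinearMap.ker (π.1 i).mulVecLin := by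
  intro u hu
  rw [LinearMap.mem_ker]
  ext k
  set M : Matrix (Fin (w i.1 (q ^ 0))) (Fin (w i.1 (q ^ 2))) ℂ :=
    Matrix.of (fun s t => u s * (if t = k then 1 else 0)) with hM
  set ρ : EWSp ξ e0 e1 q w :=
    (fun j => if h : j = i then
        M.submatrix
          (Fin.cast (congrArg (fun j : {i : I // ξ i = false} => w j.1 (q ^ 0)) h))
          (Fin.cast (congrArg (fun j : {i : I // ξ i = false} => w j.1 (q ^ 2)) h))
      else 0, 0, 0) with hρ
  have hpair := hperp ρ ?_
  · -- compute pairing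
    have h1 : ewPairing ξ e0 e1 q w ρ π = ((π.1 i).mulVec u) k := by
      rw [ewPairing]
      have h2 : (∑ j : {i : I // ξ i = true}, ((ρ.2.1 j) * (π.2.1 j)).trace) = 0 := by
        apply Finset.sum_eq_zero; intro j _
        have hz : ρ.2.1 j = 0 := rfl
        rw [hz, Matrix.zero_mul, Matrix.trace_zero]
      have h3 : (∑ e : E, ((ρ.2.2 e) * (π.2.2 e)).trace) = 0 := by
        apply Finset.sum_eq_zero; intro e _
        have hz : ρ.2.2 e = 0 := rfl
        rw [hz, Matrix.zero_mul, Matrix.trace_zero]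
      rw [h2, h3, add_zero, add_zero]
      rw [Finset.sum_eq_single i]
      · have hρi : ρ.1 i = M := by
          simp only [hρ, dif_pos rfl, Fin.cast_refl, Matrix.submatrix_id_id, dite_true]
        rw [hρi]
        calc (M * π.1 i).trace = ∑ s, ∑ t, M s t * π.1 i t s := by
              simp [Matrix.trace, Matrix.diag, Matrix.mul_apply]
          _ = ∑ s, π.1 i k s * u s := by
              apply Finset.sum_congr rfl; intro s _
              simp [hM, ite_mul, mul_ite, Finset.sum_ite_eq', mul_comm]
          _ = (π.1 i).mulVec u k := by
              simp [Matrix.mulVec, dotProduct]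
      · intro j _ hj
        have : ρ.1 j = 0 := by simp only [hρ, dif_neg hj]
        rw [this]
        simp
      · intro h; exact absurd (Finset.mem_univ i) h
    rw [h1] at hpair
    simpa using hpair
  · constructor
    · intro j
      by_cases hj : j = i
      · subst hj
        have hρi : ρ.1 j = M := by
          simp only [hρ, dif_pos rfl, Fin.cast_refl, Matrix.submatrix_id_id, dite_true]
        rw [hρi]
        rintro x ⟨y, rfl⟩
        have : M.mulVecLin y = (y k) • u := by
          ext s
          simp [hM, Matrix.mulVecLin, Matrix.mulVec, dotProduct, mul_ite,
            mul_assoc, Finset.sum_ite_eq', mul_comm]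
        rw [this]
        exact Submodule.smul_mem _ _ hu
      · have : ρ.1 j = 0 := by simp only [hρ, dif_neg hj]
        rw [this]
        simp only [Matrix.mulVecLin_zero, LinearMap.range_zero]
        exact bot_le
    · intro j z
      have h0 : ((ρ.2.1 j).mulVec z,
          fun e : {e : E // e1 e = j.1} => (ρ.2.2 e.1).mulVec
            (fun t => z (Fin.cast (congrArg (fun j => w j (q ^ 3)) e.2) t))) =
          (0 : AmbSp e0 e1 q w j.1) := by
        have ha : ρ.2.1 j = 0 := rfl
        have hb : ∀ e : E, ρ.2.2 e = 0 := fun _ => rfl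
        refine Prod.ext ?_ ?_
        · show (ρ.2.1 j).mulVec z = 0
          rw [ha, Matrix.zero_mulVec]
        · funext e
          show (ρ.2.2 e.1).mulVec _ = 0
          rw [hb e.1, Matrix.zero_mulVec]
      rw [h0]
      exact (X2 j).zero_mem

theorem perp_to_ker1 (π : EWStarSp ξ e0 e1 q w)
    (X1 : ∀ i : {i : I // ξ i = false}, Submodule ℂ (Fin (w i.1 (q ^ 0)) → ℂ))
    (X2 : ∀ i : {i : I // ξ i = true}, Submodule ℂ (AmbSp e0 e1 q w i.1))
    (hperp : ∀ ρ : EWSp ξ e0 e1 q w,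
        ((∀ i : {i : I // ξ i = false},
            LinearMap.range (ρ.1 i).mulVecLin ≤ X1 i) ∧
          ∀ (i : {i : I // ξ i = true}) (z : Fin (w i.1 (q ^ 3)) → ℂ),
            ((ρ.2.1 i).mulVec z,
              fun e : {e : E // e1 e = i.1} =>
                (ρ.2.2 e.1).mulVec
                  (fun t => z (Fin.cast (congrArg (fun j => w j (q ^ 3)) e.2) t))) ∈
              X2 i) →
        ewPairing ξ e0 e1 q w ρ π = 0)
    (i : {i : I // ξ i = true}) :
    X2 i ≤ LinearMap.ker (sigmaKerMap ξ e0 e1 q w π i) := by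
  intro z hz
  rw [LinearMap.mem_ker]
  funext k
  set N : Matrix (Fin (w i.1 (q ^ 1))) (Fin (w i.1 (q ^ 3))) ℂ :=
    Matrix.of (fun s t => z.1 s * (if t = k then 1 else 0)) with hN
  set ρ : EWSp ξ e0 e1 q w :=
    (0,
     fun j => if h : j = i then
        N.submatrix
          (Fin.cast (congrArg (fun j : {i : I // ξ i = true} => w j.1 (q ^ 1)) h))
          (Fin.cast (congrArg (fun j : {i : I // ξ i = true} => w j.1 (q ^ 3)) h))
      else 0,
     fun e => if h : e1 e = i.1 then
        Matrix.of (fun s t => z.2 ⟨e, h⟩ s *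
          (if Fin.cast (congrArg (fun j => w j (q ^ 3)) h) t = k then 1 else 0))
      else 0) with hρ
  have hpair := hperp ρ ?_
  · -- compute the pairing and identify it with (sigmaKerMap π i z) k
    have h1 : ewPairing ξ e0 e1 q w ρ π = sigmaKerMap ξ e0 e1 q w π i z k := by
      rw [ewPairing, sigmaKerMap_apply_coord]
      have h2 : (∑ j : {i : I // ξ i = false}, ((ρ.1 j) * (π.1 j)).trace) = 0 := by
        apply Finset.sum_eq_zero; intro j _
        have hzz : ρ.1 j = 0 := rfl
        rw [hzz, Matrix.zero_mul, Matrix.trace_zero]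
      have h3 : (∑ j : {i : I // ξ i = true}, ((ρ.2.1 j) * (π.2.1 j)).trace) =
          (π.2.1 i).mulVec z.1 k := by
        rw [Finset.sum_eq_single i]
        · have hρi : ρ.2.1 i = N := by
            simp only [hρ, dif_pos rfl, Fin.cast_refl, Matrix.submatrix_id_id, dite_true]
          rw [hρi]
          calc (N * π.2.1 i).trace = ∑ s, ∑ t, N s t * π.2.1 i t s := by
                simp [Matrix.trace, Matrix.diag, Matrix.mul_apply]
            _ = ∑ s, π.2.1 i k s * z.1 s := by
                apply Finset.sum_congr rfl; intro s _
                simp [hN, ite_mul, mul_ite, Finset.sum_ite_eq', mul_comm]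
            _ = (π.2.1 i).mulVec z.1 k := by
                simp [Matrix.mulVec, dotProduct]
        · intro j _ hj
          have hzz : ρ.2.1 j = 0 := by simp only [hρ, dif_neg hj]
          rw [hzz, Matrix.zero_mul, Matrix.trace_zero]
        · intro h; exact absurd (Finset.mem_univ i) h
      have h4 : (∑ e : E, ((ρ.2.2 e) * (π.2.2 e)).trace) =
          ∑ e : {e : E // e1 e = i.1},
            (π.2.2 e.1).mulVec (z.2 e)
              (Fin.cast (congrArg (fun j => w j (q ^ 3)) e.2.symm) k) := by
        refine (Fintype.sum_of_injective (fun e : {e : E // e1 e = i.1} => e.1)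
          Subtype.val_injective _ _ ?_ ?_).symm
        · intro e he
          have hne : ¬ (e1 e = i.1) := by
            intro hc
            exact he ⟨⟨e, hc⟩, rfl⟩
          have hzz : ρ.2.2 e = 0 := by simp only [hρ, dif_neg hne]
          rw [hzz, Matrix.zero_mul, Matrix.trace_zero]
        · intro e
          have hd : ρ.2.2 e.1 = Matrix.of (fun s t => z.2 e s *
              (if Fin.cast (congrArg (fun j => w j (q ^ 3)) e.2) t = k then 1 else 0)) := by
            show dite _ _ _ = _
            rw [dif_pos e.2]
          set t₀ : Fin (w (e1 e.1) (q ^ 3)) :=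
            Fin.cast (congrArg (fun j => w j (q ^ 3)) e.2.symm) k with ht₀
          have hcond : ∀ t : Fin (w (e1 e.1) (q ^ 3)),
              (Fin.cast (congrArg (fun j => w j (q ^ 3)) e.2) t = k) ↔ t = t₀ := by
            intro t
            rw [Fin.ext_iff, Fin.ext_iff]
            simp [ht₀]
          rw [hd]
          calc (π.2.2 e.1).mulVec (z.2 e) t₀
              = ∑ s, π.2.2 e.1 t₀ s * z.2 e s := by
                simp [Matrix.mulVec, dotProduct]
            _ = ∑ s, ∑ t, (z.2 e s * (if Fin.cast (congrArg (fun j => w j (q ^ 3)) e.2) t = k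
                  then 1 else 0)) * π.2.2 e.1 t s := by
                apply Finset.sum_congr rfl; intro s _
                rw [Finset.sum_congr rfl (fun t _ => by
                  rw [if_congr (hcond t) rfl rfl])]
                simp [ite_mul, mul_ite, Finset.sum_ite_eq', mul_comm]
            _ = (Matrix.of (fun s t => z.2 e s *
                  (if Fin.cast (congrArg (fun j => w j (q ^ 3)) e.2) t = k then 1 else 0))
                  * π.2.2 e.1).trace := by
                simp [Matrix.trace, Matrix.diag, Matrix.mul_apply]
      rw [h2, h3, h4, zero_add]
    rw [h1] at hpair
    exact hpair
  · constructor
    · intro j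
      have hzz : ρ.1 j = 0 := rfl
      rw [hzz]
      simp only [Matrix.mulVecLin_zero, LinearMap.range_zero]
      exact bot_le
    · intro j z₀
      by_cases hj : j = i
      · subst hj
        have hρi : ρ.2.1 j = N := by
          simp only [hρ, dif_pos rfl, Fin.cast_refl, Matrix.submatrix_id_id, dite_true]
        have hkey : ∀ e : {e : E // e1 e = j.1},
            (ρ.2.2 e.1).mulVec
              (fun t => z₀ (Fin.cast (congrArg (fun j => w j (q ^ 3)) e.2) t)) =
            z₀ k • z.2 e := by
          intro e
          have hd : ρ.2.2 e.1 = Matrix.of (fun s t => z.2 e s *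
              (if Fin.cast (congrArg (fun j => w j (q ^ 3)) e.2) t = k then 1 else 0)) := by
            show dite _ _ _ = _
            rw [dif_pos e.2]
          rw [hd]
          funext s
          set t₀ : Fin (w (e1 e.1) (q ^ 3)) :=
            Fin.cast (congrArg (fun j => w j (q ^ 3)) e.2.symm) k with ht₀
          have hcond : ∀ t : Fin (w (e1 e.1) (q ^ 3)),
              (Fin.cast (congrArg (fun j => w j (q ^ 3)) e.2) t = k) ↔ t = t₀ := by
            intro t
            rw [Fin.ext_iff, Fin.ext_iff]
            simp [ht₀]
          have hcast : Fin.cast (congrArg (fun j => w j (q ^ 3)) e.2) t₀ = k := by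
            rw [Fin.ext_iff]
            simp [ht₀]
          show (∑ t, (z.2 e s * (if Fin.cast (congrArg (fun j => w j (q ^ 3)) e.2) t = k
              then 1 else 0)) * z₀ (Fin.cast (congrArg (fun j => w j (q ^ 3)) e.2) t))
              = z₀ k * z.2 e s
          rw [Finset.sum_congr rfl (fun t _ => by
            rw [if_congr (hcond t) rfl rfl])]
          have : ∀ t : Fin (w (e1 e.1) (q ^ 3)),
              (z.2 e s * (if t = t₀ then 1 else 0))
                * z₀ (Fin.cast (congrArg (fun j => w j (q ^ 3)) e.2) t)
              = if t = t₀ then z₀ k * z.2 e s else 0 := by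
            intro t
            by_cases ht : t = t₀
            · subst ht
              rw [if_pos rfl, if_pos rfl, hcast]
              ring
            · rw [if_neg ht, if_neg ht]
              ring
          rw [Finset.sum_congr rfl (fun t _ => this t), Finset.sum_ite_eq']
          simp
        have hvec : ((ρ.2.1 j).mulVec z₀,
            fun e : {e : E // e1 e = j.1} => (ρ.2.2 e.1).mulVec
              (fun t => z₀ (Fin.cast (congrArg (fun j => w j (q ^ 3)) e.2) t))) =
            z₀ k • z := by
          refine Prod.ext ?_ ?_
          · rw [hρi]
            funext s
            show (∑ t, (z.1 s * (if t = k then 1 else 0)) * z₀ t) = (z₀ k • z).1 s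
            simp [ite_mul, Finset.sum_ite_eq', mul_comm]
          · funext e
            show (ρ.2.2 e.1).mulVec
              (fun t => z₀ (Fin.cast (congrArg (fun j => w j (q ^ 3)) e.2) t)) = (z₀ k • z).2 e
            rw [hkey e]
            rfl
        rw [hvec]
        exact Submodule.smul_mem _ _ hz
      · have hz1 : ρ.2.1 j = 0 := by simp only [hρ, dif_neg hj]
        have hz2 : ∀ e : {e : E // e1 e = j.1}, ρ.2.2 e.1 = 0 := by
          intro e
          have hne : ¬ (e1 e.1 = i.1) := by
            rw [e.2]
            intro hc
            exact hj (Subtype.ext hc)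
          simp only [hρ, dif_neg hne]
        have h0 : ((ρ.2.1 j).mulVec z₀,
            fun e : {e : E // e1 e = j.1} => (ρ.2.2 e.1).mulVec
              (fun t => z₀ (Fin.cast (congrArg (fun j => w j (q ^ 3)) e.2) t))) =
            (0 : AmbSp e0 e1 q w j.1) := by
          refine Prod.ext ?_ ?_
          · show (ρ.2.1 j).mulVec z₀ = 0
            rw [hz1, Matrix.zero_mulVec]
          · funext e
            show (ρ.2.2 e.1).mulVec _ = 0
            rw [hz2 e, Matrix.zero_mulVec]
        rw [h0]
        exact (X2 j).zero_mem

theorem ker_to_perp (he1 : ∀ e, ξ (e1 e) = true) (π : EWStarSp ξ e0 e1 q w)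
    (X1 : ∀ i : {i : I // ξ i = false}, Submodule ℂ (Fin (w i.1 (q ^ 0)) → ℂ))
    (X2 : ∀ i : {i : I // ξ i = true}, Submodule ℂ (AmbSp e0 e1 q w i.1))
    (hk0 : ∀ i, X1 i ≤ LinearMap.ker (π.1 i).mulVecLin)
    (hk1 : ∀ i, X2 i ≤ LinearMap.ker (sigmaKerMap ξ e0 e1 q w π i))
    (ρ : EWSp ξ e0 e1 q w)
    (h0 : ∀ i : {i : I // ξ i = false}, LinearMap.range (ρ.1 i).mulVecLin ≤ X1 i)
    (h1 : ∀ (i : {i : I // ξ i = true}) (z : Fin (w i.1 (q ^ 3)) → ℂ),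
        ((ρ.2.1 i).mulVec z,
          fun e : {e : E // e1 e = i.1} =>
            (ρ.2.2 e.1).mulVec
              (fun t => z (Fin.cast (congrArg (fun j => w j (q ^ 3)) e.2) t))) ∈ X2 i) :
    ewPairing ξ e0 e1 q w ρ π = 0 := by
  rw [ewPairing]
  have hS0 : (∑ i : {i : I // ξ i = false}, ((ρ.1 i) * (π.1 i)).trace) = 0 := by
    apply Finset.sum_eq_zero; intro i _
    exact trace_mul_zero_of_range_le_ker _ _ ((h0 i).trans (hk0 i))
  -- the key per-vertex identity
  have hT : ∀ i : {i : I // ξ i = true},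
      ((ρ.2.1 i) * (π.2.1 i)).trace +
        ∑ e : {e : E // e1 e = i.1}, ((ρ.2.2 e.1) * (π.2.2 e.1)).trace = 0 := by
    intro i
    have hcoord : ∀ t : Fin (w i.1 (q ^ 3)),
        ((π.2.1 i) * (ρ.2.1 i)) t t +
          ∑ e : {e : E // e1 e = i.1},
            ((π.2.2 e.1) * (ρ.2.2 e.1))
              (Fin.cast (congrArg (fun j => w j (q ^ 3)) e.2.symm) t)
              (Fin.cast (congrArg (fun j => w j (q ^ 3)) e.2.symm) t) = 0 := by
      intro t
      have hv := hk1 i (h1 i (Pi.single t 1))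
      rw [LinearMap.mem_ker] at hv
      have hvt := congrFun hv t
      rw [sigmaKerMap_apply_coord] at hvt
      have e1term : (π.2.1 i).mulVec ((ρ.2.1 i).mulVec (Pi.single t 1)) t =
          ((π.2.1 i) * (ρ.2.1 i)) t t := by
        rw [Matrix.mulVec_mulVec, Matrix.mulVec_single]
        simp
      have e2term : ∀ e : {e : E // e1 e = i.1},
          (π.2.2 e.1).mulVec
            ((ρ.2.2 e.1).mulVec
              (fun s => (Pi.single t (1 : ℂ) : Fin (w i.1 (q ^ 3)) → ℂ)
                (Fin.cast (congrArg (fun j => w j (q ^ 3)) e.2) s)))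
            (Fin.cast (congrArg (fun j => w j (q ^ 3)) e.2.symm) t) =
          ((π.2.2 e.1) * (ρ.2.2 e.1))
            (Fin.cast (congrArg (fun j => w j (q ^ 3)) e.2.symm) t)
            (Fin.cast (congrArg (fun j => w j (q ^ 3)) e.2.symm) t) := by
        intro e
        have hsingle : (fun s => (Pi.single t (1 : ℂ) : Fin (w i.1 (q ^ 3)) → ℂ)
              (Fin.cast (congrArg (fun j => w j (q ^ 3)) e.2) s)) =
            Pi.single (Fin.cast (congrArg (fun j => w j (q ^ 3)) e.2.symm) t) 1 := by
          funext s
          rw [Pi.single_apply, Pi.single_apply]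
          have hiff : (Fin.cast (congrArg (fun j => w j (q ^ 3)) e.2) s = t) ↔
              (s = Fin.cast (congrArg (fun j => w j (q ^ 3)) e.2.symm) t) := by
            rw [Fin.ext_iff, Fin.ext_iff]
            simp
          rw [if_congr hiff rfl rfl]
        rw [hsingle, Matrix.mulVec_mulVec, Matrix.mulVec_single]
        simp
      rw [e1term] at hvt
      rw [Finset.sum_congr rfl (fun e _ => e2term e)] at hvt
      exact hvt
    have hsum : (∑ t, (((π.2.1 i) * (ρ.2.1 i)) t t +
        ∑ e : {e : E // e1 e = i.1},
          ((π.2.2 e.1) * (ρ.2.2 e.1))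
            (Fin.cast (congrArg (fun j => w j (q ^ 3)) e.2.symm) t)
            (Fin.cast (congrArg (fun j => w j (q ^ 3)) e.2.symm) t))) = 0 :=
      Finset.sum_eq_zero (fun t _ => hcoord t)
    rw [Finset.sum_add_distrib] at hsum
    have hfst : (∑ t, ((π.2.1 i) * (ρ.2.1 i)) t t) = ((ρ.2.1 i) * (π.2.1 i)).trace := by
      rw [Matrix.trace_mul_comm]
      rfl
    have hsnd : (∑ t, ∑ e : {e : E // e1 e = i.1},
        ((π.2.2 e.1) * (ρ.2.2 e.1))
          (Fin.cast (congrArg (fun j => w j (q ^ 3)) e.2.symm) t)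
          (Fin.cast (congrArg (fun j => w j (q ^ 3)) e.2.symm) t)) =
        ∑ e : {e : E // e1 e = i.1}, ((ρ.2.2 e.1) * (π.2.2 e.1)).trace := by
      rw [Finset.sum_comm]
      apply Finset.sum_congr rfl
      intro e _
      rw [Matrix.trace_mul_comm]
      have := Fintype.sum_equiv (finCongr (congrArg (fun j => w j (q ^ 3)) e.2.symm))
        (fun t => ((π.2.2 e.1) * (ρ.2.2 e.1))
          (Fin.cast (congrArg (fun j => w j (q ^ 3)) e.2.symm) t)
          (Fin.cast (congrArg (fun j => w j (q ^ 3)) e.2.symm) t))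
        (fun t' => ((π.2.2 e.1) * (ρ.2.2 e.1)) t' t')
        (fun t => rfl)
      rw [this]
      rfl
    rw [hfst, hsnd] at hsum
    exact hsum
  have hS2 : (∑ e : E, ((ρ.2.2 e) * (π.2.2 e)).trace) =
      ∑ i : {i : I // ξ i = true}, ∑ e : {e : E // e1 e = i.1},
        ((ρ.2.2 e.1) * (π.2.2 e.1)).trace := by
    rw [← Fintype.sum_fiberwise (fun e : E => (⟨e1 e, he1 e⟩ : {i : I // ξ i = true}))
      (fun e => ((ρ.2.2 e) * (π.2.2 e)).trace)]
    apply Finset.sum_congr rfl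
    intro i _
    exact Fintype.sum_equiv
      (Equiv.subtypeEquivRight (fun e => by
        constructor
        · intro h; exact congrArg Subtype.val h
        · intro h; exact Subtype.ext h))
      _ _ (fun e => rfl)
  rw [hS0, zero_add, hS2, ← Finset.sum_add_distrib]
  exact Finset.sum_eq_zero (fun i _ => hT i)

end ProofLemmas

/-- Let `W` satisfy `(∗₁)` and `V` satisfy `V_i(a) = 0` unless
`a = q^{ξ_i+1}`, and let `F̃(ν,W)^⊥ ⊆ 𝓕(ν,W) × E_W^*` be the annihilator of the
subbundle `F̃(ν,W) ⊆ 𝓕(ν,W) × E_W`, with projection `π^⊥ : F̃(ν,W)^⊥ → E_W^*`.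
Then the fiber of `π^⊥` over a point `(⊕ x_i^*, ⊕ y_{h̄}^*)` of `E_W^*` is isomorphic
to the quiver Grassmannian `Gr_V(σW)` of `I × ℂ^*`-graded subspaces of `σW` described
in `GrSigmaGraded`. -/
theorem perp_fiber_equiv_quiver_grassmannian
    (ξ : I → Bool) (e0 e1 : E → I)
    (he0 : ∀ e, ξ (e0 e) = false) (he1 : ∀ e, ξ (e1 e) = true)
    (q : ℂˣ) (hq : ∀ n : ℕ, 0 < n → q ^ n ≠ 1)
    (v w : I → ℂˣ → ℕ)
    (hW : ∀ i a, w i a ≠ 0 → a = q ^ (cond (ξ i) 1 0) ∨ a = q ^ (cond (ξ i) 1 0 + 2))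
    (hV : ∀ i a, v i a ≠ 0 → a = q ^ (cond (ξ i) 1 0 + 1))
    (π : EWStarSp ξ e0 e1 q w) :
    Nonempty
      (PerpFiber ξ e0 e1 q w he0 π (fun i => v i (q ^ (cond (ξ i) 1 0 + 1))) ≃
        GrSigmaGraded ξ e0 e1 q w he0 π (fun i => v i (q ^ (cond (ξ i) 1 0 + 1)))) := by
  refine ⟨Equiv.subtypeEquivRight ?_⟩
  intro X
  constructor
  · rintro ⟨hA, hB, hC, hP⟩
    have hK0 := perp_to_ker0 ξ e0 e1 q w π X.1 X.2 hP
    have hK1 := perp_to_ker1 ξ e0 e1 q w π X.1 X.2 hP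
    exact ⟨fun i => ⟨hA i, hK0 i⟩, fun i => ⟨hB i, hK1 i⟩, hC⟩
  · rintro ⟨hA, hB, hC⟩
    refine ⟨fun i => (hA i).1, fun i => (hB i).1, hC, ?_⟩
    intro ρ hρ
    exact ker_to_perp ξ e0 e1 q w he1 π X.1 X.2
      (fun i => (hA i).2) (fun i => (hB i).2) ρ hρ.1 hρ.2
end
end

section
/- The Grothendieck ring R_{ℓ=1}, which is the polynomial ring ℤ[x_i, x_i']_{i∈I} on the classes of l-fundamental representations in 𝒞₁, embedded into the field 𝓕=ℚ(x_i,f_i)_{i∈I} via the T-system relation f_i = x_i x_i' − ∏_{h∈H: out(h)=i} x_{in(h)}, is a subalgebra of the cluster algebra 𝒜(B̃) whose initial seed is given by the x-quiver. -/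
/-!
Common setup: the cluster algebra `𝒜(B̃)` inside the field `𝓕 = ℚ(x_i, f_i)_{i ∈ I}`,
with initial seed the `x`-quiver attached to a bipartite finite graph
`𝒢 = (I₀ ⊔ I₁, E)` without edge loops.
-/

open scoped BigOperators

noncomputable section

/-- Dimension vectors of `Ĩ = I ⊔ I_fr`-graded vector spaces: `Sum.inl i` records the
dimension at the principal vertex `i`, `Sum.inr i` the dimension at the frozen vertex
`i'`. -/
abbrev DimVec (I : Type) := (I ⊕ I) → ℕ

/-- The ambient field `𝓕 = ℚ(x_i, f_i)_{i ∈ I}`: the fraction field of the polynomial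
ring in the indeterminates `x_i` (indexed by `Sum.inl i`) and `f_i`
(indexed by `Sum.inr i`). -/
abbrev ClField (I : Type) := FractionRing (MvPolynomial (I ⊕ I) ℚ)

/-- The initial cluster variable `x_i`. -/
def xVar {I : Type} (i : I) : ClField I :=
  algebraMap (MvPolynomial (I ⊕ I) ℚ) (ClField I) (MvPolynomial.X (.inl i))

/-- The frozen variable `f_i` (the class of the Kirillov–Reshetikhin module). -/
def fVar {I : Type} (i : I) : ClField I :=
  algebraMap (MvPolynomial (I ⊕ I) ℚ) (ClField I) (MvPolynomial.X (.inr i))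

section Cluster

variable {I E : Type} [Fintype I] [Fintype E] [DecidableEq I]
variable (ξ : I → Bool) (e0 e1 : E → I)

/-- A seed: a cluster `(y_v)_{v ∈ Ĩ}` of elements of `𝓕` together with an extended
exchange matrix `B̃ = (b_{v j})_{v ∈ Ĩ, j ∈ I}` (the frozen vertices are never mutated). -/
abbrev Seed (I : Type) : Type := ((I ⊕ I) → ClField I) × ((I ⊕ I) → I → ℤ)

/-- Mutation of a seed in the direction of the (principal) vertex `k`: the exchange
relation `x_k^* = (∏_{b_{vk} > 0} y_v^{b_{vk}} + ∏_{b_{vk} < 0} y_v^{-b_{vk}}) / y_k`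
together with the matrix mutation
`b'_{vj} = -b_{vj}` if `v = k` or `j = k`, and
`b'_{vj} = b_{vj} + sgn(b_{vk})·max(b_{vk} b_{kj}, 0)` otherwise. -/
def mutateSeed (s : Seed I) (k : I) : Seed I :=
  (fun v => if v = .inl k then
      ((∏ j : I ⊕ I, s.1 j ^ (max (s.2 j k) 0).toNat) +
        ∏ j : I ⊕ I, s.1 j ^ (max (-s.2 j k) 0).toNat) / s.1 (.inl k)
    else s.1 v,
   fun v j => if v = .inl k ∨ j = k then -s.2 v j
    else s.2 v j + (s.2 v k).sign * max (s.2 v k * s.2 (.inl k) j) 0)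

/-- The exchange matrix of the `x`-quiver: arrows `f_i → x_i` for `i ∈ I₀`
(`ξ i = false`), `x_i → f_i` for `i ∈ I₁`, and an arrow `x_{e0 e} → x_{e1 e}` for every
edge `e` (from the `I₀`-endpoint to the `I₁`-endpoint);
`b_{vj} = #(arrows j → v) - #(arrows v → j)`. -/
def xQuiverB : (I ⊕ I) → I → ℤ := fun v j =>
  match v with
  | .inl a =>
      ((Finset.univ.filter fun e : E => e0 e = j ∧ e1 e = a).card : ℤ) -
        ((Finset.univ.filter fun e : E => e0 e = a ∧ e1 e = j).card : ℤ)
  | .inr a => if a = j then (if ξ a then 1 else -1) else 0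

/-- The initial seed of `𝒜(B̃)`: the cluster `(x_i, f_i)` and the `x`-quiver matrix. -/
def initialSeed : Seed I :=
  (fun v => match v with | .inl i => xVar i | .inr i => fVar i, xQuiverB ξ e0 e1)

/-- The seeds of the cluster algebra: everything obtained from the initial seed by a
finite sequence of mutations at principal vertices. -/
def IsSeed (s : Seed I) : Prop :=
  Relation.ReflTransGen (fun s t => ∃ k : I, t = mutateSeed s k) (initialSeed ξ e0 e1) s

/-- The set of cluster variables (including the frozen variables): the union of all
clusters. -/
def clusterVariables : Set (ClField I) :=
  {y | ∃ s : Seed I, IsSeed ξ e0 e1 s ∧ ∃ v : I ⊕ I, s.1 v = y}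

/-- The cluster algebra `𝒜(B̃) ⊆ 𝓕`: the subring generated by all cluster variables. -/
def clusterAlgebra : Subring (ClField I) :=
  Subring.closure (clusterVariables ξ e0 e1)

/-- The class `x_i' = L(S_i)`, given by the T-system
`f_i = x_i x_i' - ∏_{h ∈ H : out(h) = i} x_{in(h)}`, i.e.
`x_i' = (f_i + ∏_{h : out(h) = i} x_{in(h)}) / x_i` (the product is over all edges
incident to `i`, `in(h)` being the other endpoint). -/
def xPrimeVar (i : I) : ClField I :=
  (fVar i +
      (∏ e ∈ Finset.univ.filter fun e : E => e0 e = i, xVar (e1 e)) *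
        ∏ e ∈ Finset.univ.filter fun e : E => e1 e = i, xVar (e0 e)) / xVar i

end Cluster


section Aux

variable {I E : Type} [Fintype I] [Fintype E] [DecidableEq I]

lemma prod_pow_card_e0 (e0 e1 : E → I) (i : I) :
    (∏ a : I, xVar a ^ (Finset.univ.filter fun e : E => e0 e = i ∧ e1 e = a).card)
      = ∏ e ∈ Finset.univ.filter fun e : E => e0 e = i, xVar (e1 e) := by
  rw [← Finset.prod_fiberwise_of_maps_to (g := e1) (t := Finset.univ)
      (fun e _ => Finset.mem_univ (e1 e)) (fun e => xVar (e1 e))]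
  refine Finset.prod_congr rfl fun a _ => ?_
  rw [Finset.filter_filter]
  have h : ∀ e ∈ Finset.univ.filter (fun e : E => e0 e = i ∧ e1 e = a),
      xVar (e1 e) = xVar a := by
    intro e he
    rw [(Finset.mem_filter.mp he).2.2]
  rw [Finset.prod_congr rfl h, Finset.prod_const]

lemma prod_pow_card_e1 (e0 e1 : E → I) (i : I) :
    (∏ a : I, xVar a ^ (Finset.univ.filter fun e : E => e0 e = a ∧ e1 e = i).card)
      = ∏ e ∈ Finset.univ.filter fun e : E => e1 e = i, xVar (e0 e) := by
  rw [← Finset.prod_fiberwise_of_maps_to (g := e0) (t := Finset.univ)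
      (fun e _ => Finset.mem_univ (e0 e)) (fun e => xVar (e0 e))]
  refine Finset.prod_congr rfl fun a _ => ?_
  rw [Finset.filter_filter]
  have h : ∀ e ∈ Finset.univ.filter (fun e : E => e1 e = i ∧ e0 e = a),
      xVar (e0 e) = xVar a := by
    intro e he
    rw [(Finset.mem_filter.mp he).2.2]
  have hset : (Finset.univ.filter fun e : E => e1 e = i ∧ e0 e = a)
      = Finset.univ.filter fun e : E => e0 e = a ∧ e1 e = i := by
    apply Finset.filter_congr
    intro e _
    simp [and_comm]
  rw [Finset.prod_congr rfl h, Finset.prod_const, hset]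

lemma mutate_fst (ξ : I → Bool) (e0 e1 : E → I)
    (he0 : ∀ e, ξ (e0 e) = false) (he1 : ∀ e, ξ (e1 e) = true) (i : I) :
    (mutateSeed (initialSeed ξ e0 e1) i).1 (.inl i) = xPrimeVar e0 e1 i := by
  have hden : (initialSeed ξ e0 e1 : Seed I).1 (.inl i) = xVar i := rfl
  simp only [mutateSeed, if_pos rfl, hden, Fintype.prod_sum_type]
  cases hξ : ξ i with
  | false =>
    have hempty : (Finset.univ.filter fun e : E => e1 e = i) = ∅ := by
      rw [Finset.filter_eq_empty_iff]
      intro e _ h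
      have := he1 e
      rw [h, hξ] at this
      exact Bool.false_ne_true this
    have hcard : ∀ a : I,
        (Finset.univ.filter fun e : E => e0 e = a ∧ e1 e = i).card = 0 := by
      intro a
      rw [Finset.card_eq_zero, Finset.filter_eq_empty_iff]
      intro e _ h
      have := he1 e
      rw [h.2, hξ] at this
      exact Bool.false_ne_true this
    have hB1 : ∀ a : I, (initialSeed ξ e0 e1 : Seed I).2 (.inl a) i
        = ((Finset.univ.filter fun e : E => e0 e = i ∧ e1 e = a).card : ℤ) := by
      intro a
      simp [initialSeed, xQuiverB, hcard a]
    have hB2 : ∀ a : I, (initialSeed ξ e0 e1 : Seed I).2 (.inr a) i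
        = if a = i then -1 else 0 := by
      intro a
      simp only [initialSeed, xQuiverB]
      by_cases h : a = i
      · subst h; simp [hξ]
      · simp [h]
    have hP1 : ∀ a : I, (max ((initialSeed ξ e0 e1 : Seed I).2 (.inl a) i) 0).toNat
        = (Finset.univ.filter fun e : E => e0 e = i ∧ e1 e = a).card := by
      intro a; rw [hB1 a]; simp
    have hQ1 : ∀ a : I, (max (-(initialSeed ξ e0 e1 : Seed I).2 (.inl a) i) 0).toNat
        = 0 := by
      intro a; rw [hB1 a]; simp
    have hP2 : ∀ a : I, (max ((initialSeed ξ e0 e1 : Seed I).2 (.inr a) i) 0).toNat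
        = 0 := by
      intro a; rw [hB2 a]; by_cases h : a = i <;> simp [h]
    have hQ2 : ∀ a : I, (max (-(initialSeed ξ e0 e1 : Seed I).2 (.inr a) i) 0).toNat
        = if a = i then 1 else 0 := by
      intro a; rw [hB2 a]; by_cases h : a = i <;> simp [h]
    simp only [hP1, hQ1, hP2, hQ2, pow_zero, Finset.prod_const_one, mul_one, one_mul,
      pow_ite, pow_one, Finset.prod_ite_eq', Finset.mem_univ, if_pos]
    have hin : ∀ a : I, (initialSeed ξ e0 e1 : Seed I).1 (.inl a) = xVar a :=
      fun a => rfl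
    have hfr : (initialSeed ξ e0 e1 : Seed I).1 (.inr i) = fVar i := rfl
    simp only [hin, hfr]
    rw [prod_pow_card_e0 e0 e1 i, xPrimeVar, hempty]
    rw [Finset.prod_empty, mul_one, add_comm]
  | true =>
    have hempty : (Finset.univ.filter fun e : E => e0 e = i) = ∅ := by
      rw [Finset.filter_eq_empty_iff]
      intro e _ h
      have := he0 e
      rw [h, hξ] at this
      simp at this
    have hcard : ∀ a : I,
        (Finset.univ.filter fun e : E => e0 e = i ∧ e1 e = a).card = 0 := by
      intro a
      rw [Finset.card_eq_zero, Finset.filter_eq_empty_iff]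
      intro e _ h
      have := he0 e
      rw [h.1, hξ] at this
      simp at this
    have hB1 : ∀ a : I, (initialSeed ξ e0 e1 : Seed I).2 (.inl a) i
        = -((Finset.univ.filter fun e : E => e0 e = a ∧ e1 e = i).card : ℤ) := by
      intro a
      simp [initialSeed, xQuiverB, hcard a]
    have hB2 : ∀ a : I, (initialSeed ξ e0 e1 : Seed I).2 (.inr a) i
        = if a = i then 1 else 0 := by
      intro a
      simp only [initialSeed, xQuiverB]
      by_cases h : a = i
      · subst h; simp [hξ]
      · simp [h]
    have hP1 : ∀ a : I, (max ((initialSeed ξ e0 e1 : Seed I).2 (.inl a) i) 0).toNat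
        = 0 := by
      intro a; rw [hB1 a]; simp
    have hQ1 : ∀ a : I, (max (-(initialSeed ξ e0 e1 : Seed I).2 (.inl a) i) 0).toNat
        = (Finset.univ.filter fun e : E => e0 e = a ∧ e1 e = i).card := by
      intro a; rw [hB1 a]; simp
    have hP2 : ∀ a : I, (max ((initialSeed ξ e0 e1 : Seed I).2 (.inr a) i) 0).toNat
        = if a = i then 1 else 0 := by
      intro a; rw [hB2 a]; by_cases h : a = i <;> simp [h]
    have hQ2 : ∀ a : I, (max (-(initialSeed ξ e0 e1 : Seed I).2 (.inr a) i) 0).toNat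
        = 0 := by
      intro a; rw [hB2 a]; by_cases h : a = i <;> simp [h]
    simp only [hP1, hQ1, hP2, hQ2, pow_zero, Finset.prod_const_one, mul_one, one_mul,
      pow_ite, pow_one, Finset.prod_ite_eq', Finset.mem_univ, if_pos]
    have hin : ∀ a : I, (initialSeed ξ e0 e1 : Seed I).1 (.inl a) = xVar a :=
      fun a => rfl
    have hfr : (initialSeed ξ e0 e1 : Seed I).1 (.inr i) = fVar i := rfl
    simp only [hin, hfr]
    rw [prod_pow_card_e1 e0 e1 i, xPrimeVar, hempty]
    rw [Finset.prod_empty, one_mul]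

end Aux

/-- The Grothendieck ring `R_{ℓ=1} = ℤ[x_i, x_i']_{i ∈ I}`, embedded
into `𝓕 = ℚ(x_i, f_i)_{i ∈ I}` via the T-system relation
`f_i = x_i x_i' - ∏_{h : out(h) = i} x_{in(h)}`, is a subalgebra of the cluster algebra
`𝒜(B̃)` whose initial seed is given by the `x`-quiver. -/
theorem grothendieckRing_le_clusterAlgebra
    {I E : Type} [Fintype I] [Fintype E] [DecidableEq I]
    (ξ : I → Bool) (e0 e1 : E → I)
    (he0 : ∀ e, ξ (e0 e) = false) (he1 : ∀ e, ξ (e1 e) = true) :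
    Subring.closure
        ((Set.range fun i : I => xVar i) ∪ Set.range fun i : I => xPrimeVar e0 e1 i) ≤
      clusterAlgebra ξ e0 e1 := by
  rw [Subring.closure_le]
  rintro x (⟨i, rfl⟩ | ⟨i, rfl⟩)
  · exact Subring.subset_closure
      ⟨initialSeed ξ e0 e1, Relation.ReflTransGen.refl, .inl i, rfl⟩
  · exact Subring.subset_closure
      ⟨mutateSeed (initialSeed ξ e0 e1) i,
        Relation.ReflTransGen.single ⟨i, rfl⟩, .inl i, mutate_fst ξ e0 e1 he0 he1 i⟩
end
end
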